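/- arXiv:2510.07046 — 9 statements merged into one kernel-verified Lean document; each statement's English description precedes it below -/
import Mathlib

section
/- Let (a_i)_{i=0}^{n} be a unimodal sequence of non-negative real numbers with alternating sum zero, i.e. ∑_{i=0}^{n} (-1)^i a_i = 0. Then for every integer k ≥ 0, the even partial alternating sums are non-negative: ∑_{i=0}^{2k} (-1)^i a_i ≥ 0 (where the sum is over indices i ≤ min(2k,n)). -/
open Finset

private lemma altC_aux (b : ℕ → ℝ) : ∀ m, (∀ i₁ i₂, i₁ ≤ i₂ → i₂ ≤ m → b i₂ ≤ b i₁) →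
    (∀ i ≤ m, 0 ≤ b i) →
    (if m % 2 = 0 then b m else 0) ≤ ∑ t ∈ range (m+1), (-1:ℝ)^t * b t := by
  intro m
  induction m with
  | zero => simp
  | succ m ih =>
    intro hmono hnn
    have IH := ih (fun i₁ i₂ h1 h2 => hmono i₁ i₂ h1 (h2.trans (Nat.le_succ m)))
      (fun i hi => hnn i (hi.trans (Nat.le_succ m)))
    rw [sum_range_succ]
    rcases Nat.even_or_odd m with he | ho
    · have h1 : m % 2 = 0 := Nat.even_iff.mp he
      have h2 : (m+1) % 2 ≠ 0 := by omega
      have hpow : (-1:ℝ)^(m+1) = -1 := (he.add_one).neg_one_pow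
      rw [hpow]
      simp only [h1, if_true, h2, if_false] at IH ⊢
      have hb : b (m+1) ≤ b m := hmono m (m+1) (Nat.le_succ m) le_rfl
      linarith
    · have h1 : m % 2 ≠ 0 := by have := Nat.odd_iff.mp ho; omega
      have h2 : (m+1) % 2 = 0 := by have := Nat.odd_iff.mp ho; omega
      have hpow : (-1:ℝ)^(m+1) = 1 := (ho.add_one).neg_one_pow
      rw [hpow]
      simp only [h1, if_false, h2, if_true] at IH ⊢
      linarith

private lemma altC (b : ℕ → ℝ) (m : ℕ) (hmono : ∀ i₁ i₂, i₁ ≤ i₂ → i₂ ≤ m → b i₂ ≤ b i₁)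
    (hnn : ∀ i ≤ m, 0 ≤ b i) : 0 ≤ ∑ t ∈ range (m+1), (-1:ℝ)^t * b t := by
  refine le_trans ?_ (altC_aux b m hmono hnn)
  split
  · exact hnn m le_rfl
  · exact le_rfl

private lemma altA (a : ℕ → ℝ) (k : ℕ) (hmono : ∀ i₁ i₂, i₁ ≤ i₂ → i₂ ≤ 2*k → a i₁ ≤ a i₂)
    (h0 : 0 ≤ a 0) : 0 ≤ ∑ i ∈ range (2*k+1), (-1:ℝ)^i * a i := by
  induction k with
  | zero => simpa using h0
  | succ k ih =>
    have IH := ih (fun i₁ i₂ h1 h2 => hmono i₁ i₂ h1 (by omega))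
    have h3 : 2*(k+1)+1 = (2*k+1) + 1 + 1 := by ring
    rw [h3, sum_range_succ, sum_range_succ]
    have he : Even (2*k) := even_two_mul k
    have hp1 : (-1:ℝ)^(2*k+1) = -1 := (he.add_one).neg_one_pow
    have hp2 : (-1:ℝ)^(2*k+1+1) = 1 := by
      rw [pow_succ, hp1]; ring
    rw [hp1, hp2]
    have hb : a (2*k+1) ≤ a (2*k+1+1) := hmono (2*k+1) (2*k+2) (by omega) (by omega)
    linarith

theorem stmt_0 (n : ℕ) (a : ℕ → ℝ)
    (hnonneg : ∀ i ≤ n, 0 ≤ a i)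
    (hunimodal : ∃ j ≤ n, (∀ i₁ i₂, i₁ ≤ i₂ → i₂ ≤ j → a i₁ ≤ a i₂) ∧
      (∀ i₁ i₂, j ≤ i₁ → i₁ ≤ i₂ → i₂ ≤ n → a i₂ ≤ a i₁))
    (hsum : ∑ i ∈ range (n + 1), (-1 : ℝ) ^ i * a i = 0) :
    ∀ k : ℕ, 0 ≤ ∑ i ∈ range (min (2 * k) n + 1), (-1 : ℝ) ^ i * a i := by
  intro k
  obtain ⟨j, hj, hinc, hdec⟩ := hunimodal
  rcases le_or_gt n (2*k) with h | h
  · rw [min_eq_right h, hsum]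
  · rw [min_eq_left h.le]
    rcases le_or_gt (2*k) j with hkj | hjk
    · exact altA a k (fun i₁ i₂ h1 h2 => hinc i₁ i₂ h1 (h2.trans hkj))
        (hnonneg 0 (Nat.zero_le n))
    · -- j < 2k < n : partial sum = - tail, tail over decreasing part
      have hsplit : ∑ i ∈ range (2*k+1), (-1:ℝ)^i * a i
          + ∑ i ∈ Ico (2*k+1) (n+1), (-1:ℝ)^i * a i
          = ∑ i ∈ range (n+1), (-1:ℝ)^i * a i :=
        sum_range_add_sum_Ico _ (by omega)
      have htail : ∑ i ∈ Ico (2*k+1) (n+1), (-1:ℝ)^i * a i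
          = - ∑ t ∈ range (n - 2*k), (-1:ℝ)^t * a (2*k+1+t) := by
        rw [sum_Ico_eq_sum_range]
        have hr : n + 1 - (2*k+1) = n - 2*k := by omega
        rw [hr, ← sum_neg_distrib]
        refine sum_congr rfl fun t _ => ?_
        have he : Even (2*k) := even_two_mul k
        have hp : (-1:ℝ)^(2*k+1+t) = -(-1:ℝ)^t := by
          rw [pow_add, pow_succ, he.neg_one_pow]; ring
        rw [hp]; ring
      have heq : ∑ i ∈ range (2*k+1), (-1:ℝ)^i * a i
          = ∑ t ∈ range (n - 2*k), (-1:ℝ)^t * a (2*k+1+t) := by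
        rw [hsum, htail] at hsplit; linarith
      rw [heq]
      have hm : n - 2*k = (n - 2*k - 1) + 1 := by omega
      rw [hm]
      refine altC (fun t => a (2*k+1+t)) (n - 2*k - 1) ?_ ?_
      · intro i₁ i₂ h1 h2
        exact hdec (2*k+1+i₁) (2*k+1+i₂) (by omega) (by omega) (by omega)
      · intro i hi
        exact hnonneg (2*k+1+i) (by omega)
end

section
/- Let (a_i)_{i=0}^{n} be a unimodal sequence of non-negative real numbers with ∑_{i=0}^{n} (-1)^i a_i = 0. Then for every integer k ≥ 1, the odd partial alternating sums are non-positive: ∑_{i=0}^{2k-1} (-1)^i a_i ≤ 0 (where the sum is over indices i ≤ min(2k-1,n)). -/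
open Finset

lemma incAux (b : ℕ → ℝ) : ∀ m : ℕ, (∀ i, i < m → b i ≤ b (i+1)) →
    (Odd m → ∑ i ∈ range (m+1), (-1:ℝ)^i * b i ≤ 0) ∧
    (Even m → ∑ i ∈ range (m+1), (-1:ℝ)^i * b i ≤ b m) := by
  intro m
  induction m with
  | zero =>
    intro _
    constructor
    · intro h; exact absurd h (by simp)
    · intro _; simp
  | succ m ih =>
    intro hm
    have ih' := ih (fun i hi => hm i (Nat.lt_succ_of_lt hi))
    have hstep : ∑ i ∈ range (m+2), (-1:ℝ)^i * b i
        = ∑ i ∈ range (m+1), (-1:ℝ)^i * b i + (-1:ℝ)^(m+1) * b (m+1) :=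
      Finset.sum_range_succ _ _
    constructor
    · intro hodd
      have hme : Even m := Nat.Odd.sub_odd hodd odd_one
      have h1 : ((-1:ℝ))^(m+1) = -1 := Odd.neg_one_pow hodd
      rw [hstep, h1]
      have := ih'.2 hme
      have hlast := hm m (Nat.lt_succ_self m)
      linarith
    · intro heven
      have hmo : Odd m := by
        rcases Nat.even_or_odd m with h | h
        · exact absurd (Even.add_one h) (by simpa using heven)
        · exact h
      have h1 : ((-1:ℝ))^(m+1) = 1 := Even.neg_one_pow heven
      rw [hstep, h1]
      have := ih'.1 hmo
      linarith

lemma decAux (b : ℕ → ℝ) : ∀ m : ℕ, (∀ i, i < m → b (i+1) ≤ b i) →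
    (Odd m → 0 ≤ ∑ i ∈ range (m+1), (-1:ℝ)^i * b i) ∧
    (Even m → b m ≤ ∑ i ∈ range (m+1), (-1:ℝ)^i * b i) := by
  intro m
  induction m with
  | zero =>
    intro _
    constructor
    · intro h; exact absurd h (by simp)
    · intro _; simp
  | succ m ih =>
    intro hm
    have ih' := ih (fun i hi => hm i (Nat.lt_succ_of_lt hi))
    have hstep : ∑ i ∈ range (m+2), (-1:ℝ)^i * b i
        = ∑ i ∈ range (m+1), (-1:ℝ)^i * b i + (-1:ℝ)^(m+1) * b (m+1) :=
      Finset.sum_range_succ _ _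
    constructor
    · intro hodd
      have hme : Even m := Nat.Odd.sub_odd hodd odd_one
      have h1 : ((-1:ℝ))^(m+1) = -1 := Odd.neg_one_pow hodd
      rw [hstep, h1]
      have := ih'.2 hme
      have hlast := hm m (Nat.lt_succ_self m)
      linarith
    · intro heven
      have hmo : Odd m := by
        rcases Nat.even_or_odd m with h | h
        · exact absurd (Even.add_one h) (by simpa using heven)
        · exact h
      have h1 : ((-1:ℝ))^(m+1) = 1 := Even.neg_one_pow heven
      rw [hstep, h1]
      have := ih'.1 hmo
      linarith

theorem stmt_1 (n : ℕ) (a : ℕ → ℝ)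
    (hnonneg : ∀ i ≤ n, 0 ≤ a i)
    (hunimodal : ∃ j ≤ n, (∀ i₁ i₂, i₁ ≤ i₂ → i₂ ≤ j → a i₁ ≤ a i₂) ∧
      (∀ i₁ i₂, j ≤ i₁ → i₁ ≤ i₂ → i₂ ≤ n → a i₂ ≤ a i₁))
    (hsum : ∑ i ∈ range (n + 1), (-1 : ℝ) ^ i * a i = 0) :
    ∀ k : ℕ, 1 ≤ k → ∑ i ∈ range (min (2 * k - 1) n + 1), (-1 : ℝ) ^ i * a i ≤ 0 := by
  intro k hk
  obtain ⟨j, hjn, hinc, hdec⟩ := hunimodal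
  rcases le_or_gt n (2 * k - 1) with hcase | hcase
  · rw [min_eq_right hcase, hsum]
  · rw [min_eq_left hcase.le]
    have hodd : Odd (2 * k - 1) := by
      obtain ⟨k', rfl⟩ := Nat.exists_eq_add_of_le hk
      refine ⟨k', by omega⟩
    have h2k : 2 * k - 1 + 1 = 2 * k := by omega
    rcases le_or_gt (2 * k - 1) j with hA | hB
    · exact (incAux a (2 * k - 1) (fun i hi => hinc i (i+1) (Nat.le_succ i)
        (le_trans hi hA))).1 hodd
    · have h2kn : 2 * k ≤ n := by omega
      have hsplit : ∑ i ∈ range (n + 1), (-1 : ℝ) ^ i * a i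
          = ∑ i ∈ range (2 * k), (-1 : ℝ) ^ i * a i
            + ∑ i ∈ Ico (2 * k) (n + 1), (-1 : ℝ) ^ i * a i := by
        rw [range_eq_Ico, range_eq_Ico]
        exact (Finset.sum_Ico_consecutive (fun i => (-1 : ℝ) ^ i * a i) (Nat.zero_le (2 * k))
          (show 2 * k ≤ n + 1 by omega)).symm
      have htail : 0 ≤ ∑ i ∈ Ico (2 * k) (n + 1), (-1 : ℝ) ^ i * a i := by
        rw [Finset.sum_Ico_eq_sum_range]
        have hrw : ∀ i, (-1:ℝ)^(2 * k + i) * a (2 * k + i) = (-1:ℝ)^i * a (2 * k + i) := by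
          intro i
          rw [pow_add]
          norm_num [pow_mul]
        simp only [hrw]
        have hm1 : n + 1 - 2 * k = n - 2 * k + 1 := by omega
        have hmono : ∀ i, i < n - 2 * k → a (2 * k + (i + 1)) ≤ a (2 * k + i) := by
          intro i hi
          exact hdec (2 * k + i) (2 * k + (i+1)) (by omega) (by omega) (by omega)
        have haux := decAux (fun i => a (2 * k + i)) (n - 2 * k) hmono
        rw [hm1]
        rcases Nat.even_or_odd (n - 2 * k) with h | h
        · exact le_trans (hnonneg (2 * k + (n - 2 * k)) (by omega)) (haux.2 h)
        · exact haux.1 h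
      rw [h2k]
      have heq := hsplit
      rw [hsum] at heq
      linarith
end

section
/- Let (a_i)_{i=0}^{n} be a log-concave sequence of positive real numbers with ∑_{i=0}^{n} (-1)^i a_i = 0. Then for every integer k ≥ 0, ∑_{i=0}^{2k} (-1)^i a_i ≥ 0 and ∑_{i=0}^{2k+1} (-1)^i a_i ≤ 0 (sums over indices i ≤ n). -/
open Finset

theorem stmt_3 (n : ℕ) (a : ℕ → ℝ)
    (hpos : ∀ i ≤ n, 0 < a i)
    (hlogconcave : ∀ k, 0 < k → k < n → a (k - 1) * a (k + 1) ≤ a k ^ 2)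
    (hsum : ∑ i ∈ range (n + 1), (-1 : ℝ) ^ i * a i = 0) :
    ∀ k : ℕ, (0 ≤ ∑ i ∈ range (min (2 * k) n + 1), (-1 : ℝ) ^ i * a i) ∧
      ∑ i ∈ range (min (2 * k + 1) n + 1), (-1 : ℝ) ^ i * a i ≤ 0 := by
  classical
  set T : ℕ → ℝ := fun m => (-1 : ℝ) ^ m * ∑ i ∈ range (m + 1), (-1 : ℝ) ^ i * a i with hT
  have hTrec : ∀ m, T (m + 1) = a (m + 1) - T m := by
    intro m
    simp only [hT, Finset.sum_range_succ, mul_add, ← mul_assoc, ← pow_add]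
    have h1 : ((-1 : ℝ)) ^ (m + 1 + (m + 1)) = 1 := by
      rw [show m + 1 + (m + 1) = 2 * (m + 1) by ring, pow_mul]; norm_num
    rw [h1, one_mul, pow_succ]
    ring
  have hT0 : T 0 = a 0 := by simp [hT]
  have hTn : T n = 0 := by simp [hT, hsum]
  -- peak decomposition
  obtain ⟨p, hpn, hinc, hdec⟩ : ∃ p, p ≤ n ∧ (∀ k < p, a k ≤ a (k + 1)) ∧
      (∀ k, p ≤ k → k < n → a (k + 1) < a k) := by
    by_cases h : ∃ k, k < n ∧ a (k + 1) < a k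
    · refine ⟨Nat.find h, (Nat.find_spec h).1.le, ?_, ?_⟩
      · intro k hk
        have hkn : k < n := hk.trans_le (Nat.find_spec h).1.le
        have := Nat.find_min h hk
        push_neg at this
        exact this hkn
      · intro k hk hkn
        induction k, hk using Nat.le_induction with
        | base => exact (Nat.find_spec h).2
        | succ m hm ih =>
          have hmn : m < n := by omega
          have h1 : a (m + 1) < a m := ih hmn
          have h2 := hlogconcave (m + 1) (by omega) hkn
          simp only [Nat.add_sub_cancel] at h2
          have hm1pos : 0 < a (m + 1) := hpos _ (by omega)
          have hmpos : 0 < a m := hpos _ (by omega)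
          nlinarith
    · push_neg at h
      exact ⟨n, le_rfl, fun k hk => h k hk, fun k hk hkn => absurd hkn (by omega)⟩
  -- forward induction on the increasing part
  have fwd : ∀ m, m ≤ p → 0 ≤ T m ∧ T m ≤ a m := by
    intro m
    induction m with
    | zero => intro _; rw [hT0]; exact ⟨(hpos 0 (by omega)).le, le_rfl⟩
    | succ m ih =>
      intro hmp
      obtain ⟨h1, h2⟩ := ih (by omega)
      have h3 : a m ≤ a (m + 1) := hinc m (by omega)
      rw [hTrec]
      constructor <;> linarith
  -- backward induction on the decreasing part
  have bwd : ∀ d m, m + d = n → p ≤ m → 0 ≤ T m ∧ (m < n → T m ≤ a (m + 1)) := by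
    intro d
    induction d with
    | zero =>
      intro m hm _
      have : m = n := by omega
      subst this
      exact ⟨hTn.ge, fun h => absurd h (lt_irrefl _)⟩
    | succ d ih =>
      intro m hm hpm
      obtain ⟨h1, h2⟩ := ih (m + 1) (by omega) (by omega)
      have hmn : m < n := by omega
      have hle : T (m + 1) ≤ a (m + 1) := by
        rcases eq_or_lt_of_le (show m + 1 ≤ n by omega) with heq | hlt
        · rw [heq, hTn]; exact (hpos n le_rfl).le
        · exact (h2 hlt).trans (hdec (m + 1) (by omega) hlt).le
      have hr := hTrec m
      exact ⟨by linarith, fun _ => by linarith⟩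
  have key : ∀ m ≤ n, 0 ≤ T m := by
    intro m hmn
    rcases le_total m p with h | h
    · exact (fwd m h).1
    · exact (bwd (n - m) m (by omega) h).1
  intro k
  constructor
  · rcases le_or_gt n (2 * k) with h | h
    · rw [min_eq_right h]
      exact hsum.ge
    · rw [min_eq_left h.le]
      have := key (2 * k) h.le
      have h1 : ((-1 : ℝ)) ^ (2 * k) = 1 := by rw [pow_mul]; norm_num
      simp only [hT, h1, one_mul] at this
      exact this
  · rcases le_or_gt n (2 * k + 1) with h | h
    · rw [min_eq_right h]
      exact hsum.le
    · rw [min_eq_left h.le]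
      have := key (2 * k + 1) h.le
      have h1 : ((-1 : ℝ)) ^ (2 * k + 1) = -1 := by rw [pow_succ, pow_mul]; norm_num
      simp only [hT, h1, neg_one_mul] at this
      linarith
end

section
/- Let L be a finite geometric lattice with rank function r. For every x ≤ y in L, the Möbius function alternates in sign strictly: (-1)^{r(y)-r(x)} μ(x,y) > 0. -/
open Finset

theorem stmt_6 {L : Type*} [Lattice L] [BoundedOrder L] [Fintype L]
    [DecidableEq L] [DecidableRel ((· ≤ ·) : L → L → Prop)]
    -- L is a geometric lattice: atomistic and semimodular with rank function r
    (hatomistic : ∀ x : L, ∃ s : Finset L, (∀ a ∈ s, IsAtom a) ∧ x = s.sup id)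
    (r : L → ℕ)
    (hr_bot : r ⊥ = 0)
    (hr_cov : ∀ x y : L, x ⋖ y → r y = r x + 1)
    (hr_semimodular : ∀ x y : L, r (x ⊓ y) + r (x ⊔ y) ≤ r x + r y)
    -- mu is the Möbius function of L
    (mu : L → L → ℤ)
    (hmu_refl : ∀ x : L, mu x x = 1)
    (hmu_sum : ∀ x z : L, x < z → ∑ y ∈ univ.filter (fun y => x ≤ y ∧ y ≤ z), mu x y = 0)
    (hmu_nle : ∀ x z : L, ¬ x ≤ z → mu x z = 0) :
    ∀ x y : L, x ≤ y → 0 < (-1 : ℤ) ^ (r y - r x) * mu x y := by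
  classical
  -- strict monotonicity of the rank function
  have hmono : ∀ u : L, ∀ v, u < v → r u < r v := by
    have wf : WellFounded ((· > ·) : L → L → Prop) := wellFounded_gt
    intro u
    refine wf.induction (C := fun u => ∀ v, u < v → r u < r v) u ?_
    intro u ih v huv
    obtain ⟨w, huw, hwv⟩ := exists_covBy_le_of_lt huv
    have h1 : r w = r u + 1 := hr_cov u w huw
    rcases eq_or_lt_of_le hwv with rfl | hlt
    · omega
    · have h2 : r w < r v := ih w huw.lt v hlt
      omega
  have hle : ∀ u v : L, u ≤ v → r u ≤ r v := by
    intro u v h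
    rcases eq_or_lt_of_le h with rfl | h
    · exact le_rfl
    · exact (hmono u v h).le
  -- rank of an atom is 1
  have hatom_rank : ∀ p : L, IsAtom p → r p = 1 := by
    intro p hp
    have := hr_cov ⊥ p hp.bot_covBy
    omega
  -- Weisner's theorem
  have weisner : ∀ x a : L, x < a → ∀ w : L, a ≤ w →
      ∑ z ∈ univ.filter (fun z => x ≤ z ∧ z ⊔ a = w), mu x z = 0 := by
    intro x a hxa
    have wf : WellFounded ((· < ·) : L → L → Prop) := wellFounded_lt
    intro w
    refine wf.induction
      (C := fun w => a ≤ w →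
        ∑ z ∈ univ.filter (fun z => x ≤ z ∧ z ⊔ a = w), mu x z = 0) w ?_
    intro w ih haw
    have h0 : ∑ z ∈ univ.filter (fun z => x ≤ z ∧ z ≤ w), mu x z = 0 :=
      hmu_sum x w (lt_of_lt_of_le hxa haw)
    have hfib : ∑ w' ∈ univ.filter (fun w' => a ≤ w' ∧ w' ≤ w),
          ∑ z ∈ (univ.filter (fun z => x ≤ z ∧ z ≤ w)).filter (fun z => z ⊔ a = w'),
            mu x z
        = ∑ z ∈ univ.filter (fun z => x ≤ z ∧ z ≤ w), mu x z := by
      refine Finset.sum_fiberwise_of_maps_to ?_ _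
      intro z hz
      simp only [mem_filter, mem_univ, true_and] at hz ⊢
      exact ⟨le_sup_right, sup_le hz.2 haw⟩
    -- rewrite inner fibers
    have hinner : ∀ w' : L, w' ≤ w →
        (univ.filter (fun z => x ≤ z ∧ z ≤ w)).filter (fun z => z ⊔ a = w')
          = univ.filter (fun z => x ≤ z ∧ z ⊔ a = w') := by
      intro w' hw'
      ext z
      simp only [mem_filter, mem_univ, true_and]
      constructor
      · rintro ⟨⟨h1, h2⟩, h3⟩; exact ⟨h1, h3⟩
      · rintro ⟨h1, h3⟩
        exact ⟨⟨h1, le_trans (le_trans le_sup_left h3.le) hw'⟩, h3⟩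
    have hsum : ∑ w' ∈ univ.filter (fun w' => a ≤ w' ∧ w' ≤ w),
        (∑ z ∈ univ.filter (fun z => x ≤ z ∧ z ⊔ a = w'), mu x z) = 0 := by
      rw [← h0, ← hfib]
      refine Finset.sum_congr rfl ?_
      intro w' hw'
      simp only [mem_filter, mem_univ, true_and] at hw'
      rw [hinner w' hw'.2]
    -- split off w' = w
    have hwmem : w ∈ univ.filter (fun w' => a ≤ w' ∧ w' ≤ w) := by
      simp [haw]
    rw [← Finset.add_sum_erase _ _ hwmem] at hsum
    have hzero : ∑ w' ∈ (univ.filter (fun w' => a ≤ w' ∧ w' ≤ w)).erase w,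
        (∑ z ∈ univ.filter (fun z => x ≤ z ∧ z ⊔ a = w'), mu x z) = 0 := by
      refine Finset.sum_eq_zero ?_
      intro w' hw'
      have h1 := Finset.mem_of_mem_erase hw'
      have h2 := Finset.ne_of_mem_erase hw'
      simp only [mem_filter, mem_univ, true_and] at h1
      exact ih w' (lt_of_le_of_ne h1.2 h2) h1.1
    rw [hzero, add_zero] at hsum
    exact hsum
  -- main induction
  intro x y
  have wf : WellFounded ((· < ·) : L → L → Prop) := wellFounded_lt
  refine wf.induction
    (C := fun y => x ≤ y → 0 < (-1 : ℤ) ^ (r y - r x) * mu x y) y ?_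
  intro y ih hxy
  rcases eq_or_lt_of_le hxy with rfl | hlt
  · simp [hmu_refl]
  -- pick an atom a of the interval [x, y]
  obtain ⟨a, hxa, hay⟩ := exists_covBy_le_of_lt hlt
  have hra : r a = r x + 1 := hr_cov x a hxa
  -- Weisner at w = y
  have hW := weisner x a hxa.lt y hay
  have hymem : y ∈ univ.filter (fun z => x ≤ z ∧ z ⊔ a = y) := by
    simp [hxy, sup_eq_left.mpr hay]
  rw [← Finset.add_sum_erase _ _ hymem] at hW
  set E := (univ.filter (fun z => x ≤ z ∧ z ⊔ a = y)).erase y with hE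
  have hmu_eq : mu x y = -∑ z ∈ E, mu x z := by linarith
  -- facts about elements of E
  have hEfacts : ∀ z ∈ E, x ≤ z ∧ z < y ∧ r y = r z + 1 := by
    intro z hz
    have h1 := Finset.mem_of_mem_erase hz
    have h2 := Finset.ne_of_mem_erase hz
    simp only [mem_filter, mem_univ, true_and] at h1
    obtain ⟨hxz, hzsup⟩ := h1
    have hzy : z < y := lt_of_le_of_ne (le_trans le_sup_left hzsup.le) h2
    have hnaz : ¬ a ≤ z := by
      intro h
      exact h2 (by rw [← hzsup, sup_eq_left.mpr h])
    -- z ⊓ a = x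
    have hinf : z ⊓ a = x := by
      have h3 : x ≤ z ⊓ a := le_inf hxz hxa.lt.le
      rcases eq_or_lt_of_le h3 with h | h
      · exact h.symm
      · exfalso
        have h4 : z ⊓ a < a :=
          lt_of_le_of_ne inf_le_right (fun he => hnaz (he ▸ inf_le_left))
        exact hxa.2 h h4
    have hsm := hr_semimodular z a
    rw [hinf, hzsup, hra] at hsm
    have := hmono z y hzy
    constructor
    · exact hxz
    constructor
    · exact hzy
    · omega
  -- E is nonempty
  have hEne : E.Nonempty := by
    have hSne : (univ.filter (fun z => x ≤ z ∧ z ≤ y ∧ ¬ a ≤ z)).Nonempty := by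
      refine ⟨x, ?_⟩
      simp only [mem_filter, mem_univ, true_and]
      exact ⟨le_rfl, hxy, fun h => absurd (le_antisymm h hxa.lt.le) hxa.lt.ne'⟩
    obtain ⟨m, hm, hmax'⟩ := Finset.exists_maximal hSne
    have hmax : ∀ x' ∈ univ.filter (fun z => x ≤ z ∧ z ≤ y ∧ ¬ a ≤ z), ¬ m < x' :=
      fun x' hx' h => h.not_ge (hmax' hx' h.le)
    simp only [mem_filter, mem_univ, true_and] at hm
    obtain ⟨hxm, hmy, hnam⟩ := hm
    -- claim: m ⊔ a = y
    have hsup : m ⊔ a = y := by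
      by_contra hne
      have hlt' : m ⊔ a < y := lt_of_le_of_ne (sup_le hmy hay) hne
      obtain ⟨s, hs_atoms, hy_sup⟩ := hatomistic y
      have : ∃ p ∈ s, ¬ p ≤ m ⊔ a := by
        by_contra hall
        push_neg at hall
        have : y ≤ m ⊔ a := hy_sup ▸ Finset.sup_le hall
        exact absurd this (not_le_of_gt hlt')
      obtain ⟨p, hps, hpn⟩ := this
      have hp : IsAtom p := hs_atoms p hps
      have hpy : p ≤ y := hy_sup ▸ Finset.le_sup (f := id) hps
      have hpnm : ¬ p ≤ m := fun h => hpn (le_trans h le_sup_left)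
      have hinfb : m ⊓ p = ⊥ := by
        rcases hp.le_iff.mp (inf_le_right : m ⊓ p ≤ p) with h | h
        · exact h
        · exact absurd (h ▸ inf_le_left) hpnm
      have hsm := hr_semimodular m p
      rw [hinfb, hr_bot, hatom_rank p hp] at hsm
      have hmlt : m < m ⊔ p :=
        lt_of_le_of_ne le_sup_left (fun h => hpnm (h ▸ le_sup_right))
      have hr1 : r (m ⊔ p) = r m + 1 := by
        have := hmono m (m ⊔ p) hmlt
        omega
      have hnap : ¬ a ≤ m ⊔ p := by
        intro h
        have h1 : m ⊔ a ≤ m ⊔ p := sup_le le_sup_left h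
        have h2 : m < m ⊔ a :=
          lt_of_le_of_ne le_sup_left (fun h' => hnam (h' ▸ le_sup_right))
        rcases eq_or_lt_of_le h1 with h3 | h3
        · exact hpn (h3 ▸ le_sup_right)
        · have := hmono m (m ⊔ a) h2
          have := hmono (m ⊔ a) (m ⊔ p) h3
          omega
      have : m ⊔ p ∈ univ.filter (fun z => x ≤ z ∧ z ≤ y ∧ ¬ a ≤ z) := by
        simp only [mem_filter, mem_univ, true_and]
        exact ⟨le_trans hxm le_sup_left, sup_le hmy hpy, hnap⟩
      exact hmax _ this hmlt
    refine ⟨m, ?_⟩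
    rw [hE]
    refine Finset.mem_erase.mpr ⟨?_, ?_⟩
    · intro h; exact hnam (h ▸ hay)
    · simp only [mem_filter, mem_univ, true_and]
      exact ⟨hxm, hsup⟩
  -- put the signs together
  have hrxy : r x < r y := hmono x y hlt
  have hkey : (-1 : ℤ) ^ (r y - r x) * mu x y
      = ∑ z ∈ E, (-1 : ℤ) ^ (r z - r x) * mu x z := by
    rw [hmu_eq, mul_neg, ← neg_mul, Finset.mul_sum]
    refine Finset.sum_congr rfl ?_
    intro z hz
    obtain ⟨hxz, hzy, hry⟩ := hEfacts z hz
    have hrxz : r x ≤ r z := hle x z hxz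
    have h1 : r y - r x = (r z - r x) + 1 := by omega
    rw [h1, pow_succ]
    ring
  rw [hkey]
  refine Finset.sum_pos ?_ hEne
  intro z hz
  obtain ⟨hxz, hzy, _⟩ := hEfacts z hz
  exact ih z hzy hxz
end

section
/- Let M be a loopless matroid on a finite ground set E with rank function r, and define the Whitney numbers of the first kind w_i(M) by ∑_{A ⊆ E} (-1)^{|A|} λ^{r(E)-r(A)} = ∑_{i=0}^{r(E)} w_i(M) λ^{r(E)-i}. Then (-1)^i w_i(M) ≥ 0 for all 0 ≤ i ≤ r(E). -/
open Finset

lemma whitney_key {E : Type*} [DecidableEq E] (G : Finset E) : ∀ (r : Finset E → ℕ),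
    (∀ A : Finset E, A ⊆ G → r A ≤ A.card) →
    (∀ A B : Finset E, A ⊆ B → B ⊆ G → r A ≤ r B) →
    (∀ A B : Finset E, A ⊆ G → B ⊆ G → r (A ∪ B) + r (A ∩ B) ≤ r A + r B) →
    ∀ i : ℕ, 0 ≤ (-1:ℤ)^i * ∑ A ∈ G.powerset.filter (fun A => r A = i), (-1:ℤ)^A.card := by
  induction G using Finset.induction_on with
  | empty =>
    intro r hcard hmono hsub i
    have h0 : r ∅ = 0 := Nat.le_zero.mp (by simpa using hcard ∅ (by simp))
    rcases Nat.eq_zero_or_pos i with hi | hi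
    · subst hi
      simp [Finset.powerset_empty, Finset.filter_singleton, h0]
    · have hemp : (∅:Finset E).powerset.filter (fun A => r A = i) = ∅ := by
        ext A
        simp only [powerset_empty, mem_filter, mem_singleton, notMem_empty, iff_false, not_and]
        rintro rfl h
        omega
      rw [hemp]
      simp
  | @insert e G' he ih =>
    intro r hcard hmono hsub i
    have hG'G : G' ⊆ insert e G' := subset_insert e G'
    have heG : e ∈ insert e G' := mem_insert_self e G'
    have hins : ∀ B : Finset E, B ⊆ G' → insert e B ⊆ insert e G' := by
      intro B hB
      exact insert_subset_insert e hB
    have h0 : r ∅ = 0 := Nat.le_zero.mp (by simpa using hcard ∅ (by simp))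
    -- split the sum
    have hsplit : ∑ A ∈ (insert e G').powerset.filter (fun A => r A = i), (-1:ℤ)^A.card
        = (∑ A ∈ G'.powerset.filter (fun A => r A = i), (-1:ℤ)^A.card)
          - ∑ B ∈ G'.powerset.filter (fun B => r (insert e B) = i), (-1:ℤ)^B.card := by
      rw [Finset.powerset_insert, Finset.filter_union, Finset.sum_union]
      · congr 1
        rw [Finset.filter_image, Finset.sum_image]
        · rw [← Finset.sum_neg_distrib]
          apply Finset.sum_congr rfl
          intro B hB
          simp only [mem_filter, mem_powerset] at hB
          have heB : e ∉ B := fun h => he (hB.1 h)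
          rw [Finset.card_insert_of_notMem heB, pow_succ]
          ring
        · intro B hB C hC hBC
          simp only [mem_coe, mem_filter, mem_powerset] at hB hC
          have heB : e ∉ B := fun h => he (hB.1 h)
          have heC : e ∉ C := fun h => he (hC.1 h)
          rw [← Finset.erase_insert heB, ← Finset.erase_insert heC, hBC]
      · rw [Finset.disjoint_left]
        intro A hA hA'
        simp only [mem_filter, mem_powerset, Finset.filter_image, Finset.mem_image] at hA hA'
        obtain ⟨B, hB, rfl⟩ := hA'
        exact he (hA.1 (mem_insert_self e B))
    rw [hsplit]
    have hre : r {e} ≤ 1 := by simpa using hcard {e} (by simpa using heG)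
    rcases Nat.eq_zero_or_pos (r {e}) with hle | hle
    · -- e is a loop: the two sums cancel
      have heq : ∀ B : Finset E, B ⊆ G' → r (insert e B) = r B := by
        intro B hB
        have heB : e ∉ B := fun h => he (hB h)
        have h1 : r ({e} ∪ B) + r ({e} ∩ B) ≤ r {e} + r B := by
          apply hsub
          · simpa using heG
          · exact hB.trans hG'G
        have h2 : {e} ∪ B = insert e B := by
          ext x; simp [mem_insert]
        have h3 : ({e} : Finset E) ∩ B = ∅ := by
          ext x; simp; rintro rfl; exact heB
        rw [h2, h3, h0, hle] at h1
        have h4 : r B ≤ r (insert e B) :=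
          hmono B (insert e B) (subset_insert e B) (hins B hB)
        omega
      have : ∑ B ∈ G'.powerset.filter (fun B => r (insert e B) = i), (-1:ℤ)^B.card
          = ∑ A ∈ G'.powerset.filter (fun A => r A = i), (-1:ℤ)^A.card := by
        apply Finset.sum_congr _ (fun _ _ => rfl)
        apply Finset.filter_congr
        intro B hB
        simp only [mem_powerset] at hB
        rw [heq B hB]
      rw [this]
      simp
    · have hre1 : r {e} = 1 := le_antisymm hre hle
      -- contraction rank function
      set r' : Finset E → ℕ := fun B => r (insert e B) - 1 with hr'def
      have hone : ∀ B : Finset E, B ⊆ G' → 1 ≤ r (insert e B) := by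
        intro B hB
        rw [← hre1]
        exact hmono {e} (insert e B) (by simp) (hins B hB)
      have hsub' : ∀ A B : Finset E, A ⊆ G' → B ⊆ G' →
          r (insert e (A ∪ B)) + r (insert e (A ∩ B)) ≤ r (insert e A) + r (insert e B) := by
        intro A B hA hB
        have h1 := hsub (insert e A) (insert e B) (hins A hA) (hins B hB)
        have h2 : insert e A ∪ insert e B = insert e (A ∪ B) := by
          ext x
          simp only [mem_union, mem_insert]
          tauto
        have h3 : insert e A ∩ insert e B = insert e (A ∩ B) := by
          ext x
          simp only [mem_inter, mem_insert]
          tauto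
        rwa [h2, h3] at h1
      have ih' := ih r'
        (by
          intro A hA
          have h1 : r ({e} ∪ A) + r ({e} ∩ A) ≤ r {e} + r A := by
            apply hsub
            · simpa using heG
            · exact hA.trans hG'G
          have heA : e ∉ A := fun h => he (hA h)
          have h2 : {e} ∪ A = insert e A := by ext x; simp [mem_insert]
          have h3 : ({e} : Finset E) ∩ A = ∅ := by
            ext x; simp; rintro rfl; exact heA
          rw [h2, h3, h0, hre1] at h1
          have h4 := hcard A (hA.trans hG'G)
          simp only [hr'def]
          omega)
        (by
          intro A B hAB hB
          simp only [hr'def]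
          have := hmono (insert e A) (insert e B) (insert_subset_insert e hAB) (hins B hB)
          omega)
        (by
          intro A B hA hB
          have h1 := hsub' A B hA hB
          have h2 := hone (A ∪ B) (union_subset hA hB)
          have h3 := hone (A ∩ B) ((inter_subset_left).trans hA)
          have h4 := hone A hA
          have h5 := hone B hB
          simp only [hr'def]
          omega)
      have ihdel := ih r (fun A hA => hcard A (hA.trans hG'G))
        (fun A B hAB hB => hmono A B hAB (hB.trans hG'G))
        (fun A B hA hB => hsub A B (hA.trans hG'G) (hB.trans hG'G))
      rcases Nat.eq_zero_or_pos i with hi | hi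
      · subst hi
        have hemp : G'.powerset.filter (fun B => r (insert e B) = 0) = ∅ := by
          ext B
          simp only [mem_filter, mem_powerset, notMem_empty, iff_false, not_and]
          intro hB hr0
          have := hone B hB
          omega
        rw [hemp]
        simpa using ihdel 0
      · obtain ⟨j, rfl⟩ : ∃ j, i = j + 1 := ⟨i - 1, by omega⟩
        have hTi : ∑ B ∈ G'.powerset.filter (fun B => r (insert e B) = j + 1), (-1:ℤ)^B.card
            = ∑ B ∈ G'.powerset.filter (fun B => r' B = j), (-1:ℤ)^B.card := by
          apply Finset.sum_congr _ (fun _ _ => rfl)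
          apply Finset.filter_congr
          intro B hB
          simp only [mem_powerset] at hB
          have := hone B hB
          simp only [hr'def]
          constructor <;> intro h <;> omega
        rw [hTi]
        have h1 := ihdel (j + 1)
        have h2 := ih' j
        have hx : ∀ S T : ℤ, (-1:ℤ)^(j+1) * (S - T) = (-1:ℤ)^(j+1)*S + (-1:ℤ)^j*T := by
          intro S T
          rw [pow_succ]
          ring
        rw [hx]
        have := h1
        have := h2
        positivity

theorem stmt_9 {E : Type*} [Fintype E] [DecidableEq E]
    -- matroid rank function axioms
    (r : Finset E → ℕ)
    (hr_card : ∀ A : Finset E, r A ≤ A.card)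
    (hr_mono : ∀ A B : Finset E, A ⊆ B → r A ≤ r B)
    (hr_submod : ∀ A B : Finset E, r (A ∪ B) + r (A ∩ B) ≤ r A + r B)
    -- the matroid is loopless
    (hloopless : ∀ x : E, r {x} = 1)
    -- Whitney numbers of the first kind
    (w : ℕ → ℤ)
    (hw : ∀ lam : ℝ,
      ∑ A ∈ (univ : Finset (Finset E)), (-1 : ℝ) ^ A.card * lam ^ (r univ - r A)
        = ∑ i ∈ range (r univ + 1), (w i : ℝ) * lam ^ (r univ - i)) :
    ∀ i ≤ r univ, 0 ≤ (-1 : ℤ) ^ i * w i := by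
  classical
  set n := r univ with hn
  set c : ℕ → ℤ := fun j =>
    ∑ A ∈ (univ : Finset (Finset E)).filter (fun A => r A = j), (-1:ℤ)^A.card with hc
  have hgroup : ∀ lam : ℝ,
      ∑ A ∈ (univ : Finset (Finset E)), (-1:ℝ)^A.card * lam ^ (n - r A)
        = ∑ j ∈ range (n+1), (c j : ℝ) * lam ^ (n - j) := by
    intro lam
    have hmaps : ∀ A ∈ (univ : Finset (Finset E)), r A ∈ range (n+1) := by
      intro A _
      rw [mem_range]
      have := hr_mono A univ (subset_univ A)
      omega
    rw [← Finset.sum_fiberwise_of_maps_to hmaps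
      (fun A => (-1:ℝ)^A.card * lam ^ (n - r A))]
    apply Finset.sum_congr rfl
    intro j hj
    have hcong : ∀ A ∈ (univ : Finset (Finset E)).filter (fun A => r A = j),
        (-1:ℝ)^A.card * lam ^ (n - r A) = (-1:ℝ)^A.card * lam ^ (n - j) := by
      intro A hA
      simp only [mem_filter] at hA
      rw [hA.2]
    rw [Finset.sum_congr rfl hcong, ← Finset.sum_mul]
    simp only [hc]
    push_cast
    ring
  have hpoly : ∀ lam : ℝ, ∑ j ∈ range (n+1), ((c j : ℝ) - (w j : ℝ)) * lam ^ (n - j) = 0 := by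
    intro lam
    have h1 := hw lam
    rw [hgroup lam] at h1
    simp only [sub_mul]
    rw [Finset.sum_sub_distrib, h1, sub_self]
  set p : Polynomial ℝ :=
    ∑ j ∈ range (n+1), Polynomial.C ((c j : ℝ) - (w j : ℝ)) * Polynomial.X ^ (n - j) with hp
  have hpz : p = 0 := by
    apply Polynomial.funext
    intro lam
    rw [Polynomial.eval_zero]
    simp only [hp, Polynomial.eval_finset_sum, Polynomial.eval_mul, Polynomial.eval_C,
      Polynomial.eval_pow, Polynomial.eval_X]
    exact hpoly lam
  intro i hi
  have hco : p.coeff (n - i) = (c i : ℝ) - (w i : ℝ) := by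
    simp only [hp, Polynomial.finset_sum_coeff, Polynomial.coeff_C_mul, Polynomial.coeff_X_pow]
    rw [Finset.sum_eq_single i]
    · simp
    · intro j hj hji
      simp only [mem_range] at hj
      have hne1 : ¬ (n - j = n - i) := by omega
      have hne2 : ¬ (n - i = n - j) := by omega
      simp [hne1, hne2]
    · intro h
      exact absurd (mem_range.mpr (by omega)) h
  have hcr : (c i : ℝ) = (w i : ℝ) := by
    rw [hpz] at hco
    simp only [Polynomial.coeff_zero] at hco
    linarith
  have hcw : c i = w i := by exact_mod_cast hcr
  rw [← hcw]
  have key := whitney_key (univ : Finset E) r (fun A _ => hr_card A)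
    (fun A B hAB _ => hr_mono A B hAB) (fun A B _ _ => hr_submod A B) i
  rwa [Finset.powerset_univ] at key
end

section
/- Assume the sequence of absolute Whitney numbers (|w_i(M)|)_{i=0}^{r} of a simple matroid M of rank r is log-concave with no internal zeros (Adiprasito–Huh–Katz), that (-1)^i w_i(M) ≥ 0, and that ∑_{i=0}^{r} w_i(M) = 0. Then for every k ≥ 0, ∑_{i=0}^{2k} w_i(M) ≥ 0 and ∑_{i=0}^{2k+1} w_i(M) ≤ 0. -/
open Finset

-- nonincreasing from odd s : sum ≤ 0
private lemma sumL1 (w : ℕ → ℤ) (hneg : ∀ i, Odd i → w i ≤ 0)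
    (hpos : ∀ i, Even i → 0 ≤ w i) :
    ∀ n s, Odd s → (∀ i, s ≤ i → |w (i + 1)| ≤ |w i|) →
      ∑ i ∈ range n, w (s + i) ≤ 0 := by
  intro n
  induction n using Nat.strong_induction_on with
  | _ n ih =>
    match n with
    | 0 => intro s _ _; simp
    | 1 => intro s hs _; simpa using hneg s hs
    | (n + 2) =>
      intro s hs hmono
      have key : ∑ i ∈ range (n + 2), w (s + i)
          = w s + w (s + 1) + ∑ i ∈ range n, w (s + 2 + i) := by
        rw [show n + 2 = 2 + n by omega, Finset.sum_range_add]
        have h : ∀ i, w (s + (2 + i)) = w (s + 2 + i) := fun i => by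
          rw [← add_assoc]
        simp only [h, Finset.sum_range_succ, Finset.sum_range_zero]
        ring_nf
      have h1 : w s ≤ 0 := hneg s hs
      have h2 : 0 ≤ w (s + 1) := hpos (s + 1) (by rcases hs with ⟨t, ht⟩; exact ⟨t + 1, by omega⟩)
      have h3 := hmono s le_rfl
      rw [abs_of_nonpos h1, abs_of_nonneg h2] at h3
      have h4 := ih n (by omega) (s + 2) (by rcases hs with ⟨t, ht⟩; exact ⟨t + 1, by omega⟩)
        (fun i hi => hmono i (by omega))
      rw [key]; linarith

-- nonincreasing from even s : sum ≥ 0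
private lemma sumL2 (w : ℕ → ℤ) (hneg : ∀ i, Odd i → w i ≤ 0)
    (hpos : ∀ i, Even i → 0 ≤ w i) :
    ∀ n s, Even s → (∀ i, s ≤ i → |w (i + 1)| ≤ |w i|) →
      0 ≤ ∑ i ∈ range n, w (s + i) := by
  intro n
  induction n using Nat.strong_induction_on with
  | _ n ih =>
    match n with
    | 0 => intro s _ _; simp
    | 1 => intro s hs _; simpa using hpos s hs
    | (n + 2) =>
      intro s hs hmono
      have key : ∑ i ∈ range (n + 2), w (s + i)
          = w s + w (s + 1) + ∑ i ∈ range n, w (s + 2 + i) := by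
        rw [show n + 2 = 2 + n by omega, Finset.sum_range_add]
        have h : ∀ i, w (s + (2 + i)) = w (s + 2 + i) := fun i => by
          rw [← add_assoc]
        simp only [h, Finset.sum_range_succ, Finset.sum_range_zero]
        ring_nf
      have h1 : 0 ≤ w s := hpos s hs
      have h2 : w (s + 1) ≤ 0 := hneg (s + 1) (by rcases hs with ⟨t, ht⟩; exact ⟨t, by omega⟩)
      have h3 := hmono s le_rfl
      rw [abs_of_nonneg h1, abs_of_nonpos h2] at h3
      have h4 := ih n (by omega) (s + 2) (by rcases hs with ⟨t, ht⟩; exact ⟨t + 1, by omega⟩)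
        (fun i hi => hmono i (by omega))
      rw [key]; linarith

-- nondecreasing, odd s, even length : sum ≥ 0
private lemma sumL3 (w : ℕ → ℤ) (hneg : ∀ i, Odd i → w i ≤ 0)
    (hpos : ∀ i, Even i → 0 ≤ w i) :
    ∀ n s, Odd s → Even n → (∀ i, s ≤ i → i + 1 < s + n → |w i| ≤ |w (i + 1)|) →
      0 ≤ ∑ i ∈ range n, w (s + i) := by
  intro n
  induction n using Nat.strong_induction_on with
  | _ n ih =>
    match n with
    | 0 => intro s _ _ _; simp
    | 1 => intro s _ hn _; rcases hn with ⟨t, ht⟩; omega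
    | (n + 2) =>
      intro s hs hn hmono
      have key : ∑ i ∈ range (n + 2), w (s + i)
          = w s + w (s + 1) + ∑ i ∈ range n, w (s + 2 + i) := by
        rw [show n + 2 = 2 + n by omega, Finset.sum_range_add]
        have h : ∀ i, w (s + (2 + i)) = w (s + 2 + i) := fun i => by
          rw [← add_assoc]
        simp only [h, Finset.sum_range_succ, Finset.sum_range_zero]
        ring_nf
      have h1 : w s ≤ 0 := hneg s hs
      have h2 : 0 ≤ w (s + 1) := hpos (s + 1) (by rcases hs with ⟨t, ht⟩; exact ⟨t + 1, by omega⟩)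
      have h3 := hmono s le_rfl (by omega)
      rw [abs_of_nonpos h1, abs_of_nonneg h2] at h3
      have h4 := ih n (by omega) (s + 2) (by rcases hs with ⟨t, ht⟩; exact ⟨t + 1, by omega⟩)
        (by rcases hn with ⟨t, ht⟩; exact ⟨t - 1, by omega⟩)
        (fun i hi hi2 => hmono i (by omega) (by omega))
      rw [key]; linarith

-- nondecreasing, even s, even length : sum ≤ 0
private lemma sumL4 (w : ℕ → ℤ) (hneg : ∀ i, Odd i → w i ≤ 0)
    (hpos : ∀ i, Even i → 0 ≤ w i) :
    ∀ n s, Even s → Even n → (∀ i, s ≤ i → i + 1 < s + n → |w i| ≤ |w (i + 1)|) →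
      ∑ i ∈ range n, w (s + i) ≤ 0 := by
  intro n
  induction n using Nat.strong_induction_on with
  | _ n ih =>
    match n with
    | 0 => intro s _ _ _; simp
    | 1 => intro s _ hn _; rcases hn with ⟨t, ht⟩; omega
    | (n + 2) =>
      intro s hs hn hmono
      have key : ∑ i ∈ range (n + 2), w (s + i)
          = w s + w (s + 1) + ∑ i ∈ range n, w (s + 2 + i) := by
        rw [show n + 2 = 2 + n by omega, Finset.sum_range_add]
        have h : ∀ i, w (s + (2 + i)) = w (s + 2 + i) := fun i => by
          rw [← add_assoc]
        simp only [h, Finset.sum_range_succ, Finset.sum_range_zero]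
        ring_nf
      have h1 : 0 ≤ w s := hpos s hs
      have h2 : w (s + 1) ≤ 0 := hneg (s + 1) (by rcases hs with ⟨t, ht⟩; exact ⟨t, by omega⟩)
      have h3 := hmono s le_rfl (by omega)
      rw [abs_of_nonneg h1, abs_of_nonpos h2] at h3
      have h4 := ih n (by omega) (s + 2) (by rcases hs with ⟨t, ht⟩; exact ⟨t + 1, by omega⟩)
        (by rcases hn with ⟨t, ht⟩; exact ⟨t - 1, by omega⟩)
        (fun i hi hi2 => hmono i (by omega) (by omega))
      rw [key]; linarith

theorem stmt_10 (r : ℕ) (w : ℕ → ℤ)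
    (hvanish : ∀ i, r < i → w i = 0)
    -- log-concavity of the absolute Whitney numbers (Adiprasito–Huh–Katz)
    (hlogconcave : ∀ i, 0 < i → i < r → |w (i - 1)| * |w (i + 1)| ≤ |w i| ^ 2)
    -- no internal zeros
    (hnointzero : ∀ a b c, a ≤ b → b ≤ c → c ≤ r → w a ≠ 0 → w c ≠ 0 → w b ≠ 0)
    -- alternating signs
    (hsign : ∀ i, 0 ≤ (-1 : ℤ) ^ i * w i)
    -- vanishing alternating sum
    (hsum : ∑ i ∈ range (r + 1), w i = 0) :
    ∀ k : ℕ, (0 ≤ ∑ i ∈ range (2 * k + 1), w i) ∧ ∑ i ∈ range (2 * k + 2), w i ≤ 0 := by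
  have hneg : ∀ i, Odd i → w i ≤ 0 := by
    intro i hi
    have := hsign i
    rw [Odd.neg_one_pow hi] at this
    linarith
  have hpos : ∀ i, Even i → 0 ≤ w i := by
    intro i hi
    have := hsign i
    rw [Even.neg_one_pow hi] at this
    linarith
  -- the turning point
  have hex : ∃ j, r ≤ j ∨ |w (j + 1)| < |w j| := ⟨r, Or.inl le_rfl⟩
  set m := Nat.find hex with hm
  have hinc : ∀ j, j < m → |w j| ≤ |w (j + 1)| := by
    intro j hj
    have := Nat.find_min hex hj
    push_neg at this
    exact this.2
  have hmr : ∀ j, j < m → j < r := by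
    intro j hj
    have := Nat.find_min hex hj
    push_neg at this
    exact this.1
  -- decreasing with zero propagation after m
  have hdecZ : ∀ i, m ≤ i → (|w (i + 1)| ≤ |w i| ∧ (w (i + 1) = 0 → ∀ j, i + 1 ≤ j → w j = 0)) := by
    intro i hi
    induction i, hi using Nat.le_induction with
    | base =>
      rcases Nat.find_spec hex with h | h
      · constructor
        · have : w (m + 1) = 0 := hvanish _ (by omega)
          rw [this]; simp
        · intro _ j hj
          exact hvanish j (by omega)
      · refine ⟨le_of_lt h, ?_⟩
        intro hz j hj
        by_cases hjr : j ≤ r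
        · by_contra hwj
          have hwm : w m ≠ 0 := by
            intro h0
            rw [h0] at h
            simp at h
            exact absurd h (abs_nonneg _).not_gt
          exact (hnointzero m (m + 1) j (by omega) hj hjr hwm hwj) hz
        · exact hvanish j (by omega)
    | succ i hi ih =>
      by_cases hz : w (i + 1) = 0
      · have hall := ih.2 hz
        have : w (i + 2) = 0 := hall (i + 2) (by omega)
        constructor
        · rw [this, hz]
        · intro _ j hj
          exact hall j (by omega)
      · by_cases hir : i + 1 < r
        · have hlc := hlogconcave (i + 1) (by omega) hir
          simp only [Nat.add_sub_cancel] at hlc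
          have h1 : |w (i + 1)| ≤ |w i| := ih.1
          have hp : 0 < |w (i + 1)| := abs_pos.mpr hz
          have h2 : |w (i + 2)| ≤ |w (i + 1)| := by
            nlinarith [abs_nonneg (w (i + 2)), abs_nonneg (w i)]
          refine ⟨h2, ?_⟩
          intro hz2 j hj
          by_cases hjr : j ≤ r
          · by_contra hwj
            exact (hnointzero (i + 1) (i + 2) j (by omega) hj hjr hz hwj) hz2
          · exact hvanish j (by omega)
        · constructor
          · have : w (i + 2) = 0 := hvanish _ (by omega)
            rw [this]; simp
          · intro _ j hj
            exact hvanish j (by omega)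
  have hdec : ∀ i, m ≤ i → |w (i + 1)| ≤ |w i| := fun i hi => (hdecZ i hi).1
  -- sums of length ≥ r+1 are zero
  have hzero : ∀ n, r + 1 ≤ n → ∑ i ∈ range n, w i = 0 := by
    intro n hn
    have : ∑ i ∈ range n, w i = ∑ i ∈ range (r + 1), w i := by
      symm
      apply Finset.sum_subset (Finset.range_subset_range.2 hn)
      intro x hx hnx
      simp only [Finset.mem_range] at hx hnx
      exact hvanish x (by omega)
    rw [this, hsum]
  intro k
  constructor
  · -- even partial sum ≥ 0
    by_cases hbig : r + 1 ≤ 2 * k + 1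
    · rw [hzero _ hbig]
    · push_neg at hbig
      rcases le_or_gt (2 * k) m with hcase | hcase
      · -- head: nondecreasing on [0, 2k]
        have hd : ∑ i ∈ range (2 * k + 1), w i
            = ∑ i ∈ range 1, w i + ∑ i ∈ range (2 * k), w (1 + i) := by
          rw [show 2 * k + 1 = 1 + 2 * k by omega, ← Finset.sum_range_add]
        rw [hd]
        have hhead := sumL3 w hneg hpos (2 * k) 1 ⟨0, by omega⟩ ⟨k, by omega⟩
          (fun i hi hi2 => hinc i (by omega))
        simp only [Finset.sum_range_one]
        have := hpos 0 ⟨0, rfl⟩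
        linarith
      · -- tail: nonincreasing from 2k+1
        have hd : (0 : ℤ) = ∑ i ∈ range (2 * k + 1), w i
            + ∑ i ∈ range (r - 2 * k), w (2 * k + 1 + i) := by
          rw [← Finset.sum_range_add, show 2 * k + 1 + (r - 2 * k) = r + 1 by omega, hsum]
        have htail := sumL1 w hneg hpos (r - 2 * k) (2 * k + 1) ⟨k, rfl⟩
          (fun i hi => hdec i (by omega))
        linarith
  · -- odd partial sum ≤ 0
    by_cases hbig : r + 1 ≤ 2 * k + 2
    · rw [hzero _ hbig]
    · push_neg at hbig
      rcases le_or_gt (2 * k + 1) m with hcase | hcase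
      · -- head: nondecreasing on [0, 2k+1]
        have hhead := sumL4 w hneg hpos (2 * k + 2) 0 ⟨0, rfl⟩ ⟨k + 1, by omega⟩
          (fun i hi hi2 => hinc i (by omega))
        simpa using hhead
      · -- tail: nonincreasing from 2k+2
        have hd : (0 : ℤ) = ∑ i ∈ range (2 * k + 2), w i
            + ∑ i ∈ range (r - (2 * k + 1)), w (2 * k + 2 + i) := by
          rw [← Finset.sum_range_add, show 2 * k + 2 + (r - (2 * k + 1)) = r + 1 by omega, hsum]
        have htail := sumL2 w hneg hpos (r - (2 * k + 1)) (2 * k + 2) ⟨k + 1, by omega⟩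
          (fun i hi => hdec i (by omega))
        linarith
end

section
/- With w_m and W_m as the Whitney numbers of the first and second kinds of Dowling lattices (defined by their standard recurrences), define c_{n,t}(s) = ∑_{k ≥ 0} w_m(n,k) W_m(k+s, t) for non-negative integers n, s, t. Then c_{n,t} satisfies the recurrence c_{n,t}(s) = c_{n+1,t}(s-1) + (1+mn) c_{n,t}(s-1) for all s ≥ 1. -/
open Finset

theorem stmt_13 (m : ℕ) (hm : 1 ≤ m) (w W : ℕ → ℕ → ℤ)
    (hw00 : w 0 0 = 1)
    (hw_vanish : ∀ n k : ℕ, n < k → w n k = 0)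
    (hw_rec : ∀ n k : ℕ, w (n + 1) (k + 1) = w n k - (1 + (m : ℤ) * n) * w n (k + 1))
    (hw_rec0 : ∀ n : ℕ, w (n + 1) 0 = -(1 + (m : ℤ) * n) * w n 0)
    (hW00 : W 0 0 = 1)
    (hW_vanish : ∀ n k : ℕ, n < k → W n k = 0)
    (hW_rec : ∀ n k : ℕ, W (n + 1) (k + 1) = W n k + (1 + (k + 1 : ℤ) * m) * W n (k + 1))
    (hW_rec0 : ∀ n : ℕ, W (n + 1) 0 = W n 0)
    (c : ℕ → ℕ → ℕ → ℤ)
    (hc : ∀ n t s : ℕ, c n t s = ∑ k ∈ range (n + 1), w n k * W (k + s) t) :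
    ∀ n t s : ℕ, c n t (s + 1) = c (n + 1) t s + (1 + (m : ℤ) * n) * c n t s := by
  intro n t s
  simp only [hc]
  have h1 : ∑ k ∈ range (n + 1 + 1), w (n + 1) k * W (k + s) t
      = ∑ k ∈ range (n + 1), (w n k * W (k + s + 1) t
          - (1 + (m : ℤ) * n) * (w n (k + 1) * W (k + 1 + s) t))
        + (-(1 + (m : ℤ) * n) * w n 0) * W s t := by
    rw [Finset.sum_range_succ']
    congr 1
    · apply Finset.sum_congr rfl
      intro k _
      rw [hw_rec]
      have : k + 1 + s = k + s + 1 := by omega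
      rw [this]; ring
    · rw [hw_rec0]; norm_num
  have h2 : ∑ k ∈ range (n + 1), w n (k + 1) * W (k + 1 + s) t
      = ∑ k ∈ range (n + 1), w n k * W (k + s) t - w n 0 * W s t := by
    rw [Finset.sum_range_succ, hw_vanish n (n + 1) (by omega),
      Finset.sum_range_succ' (fun k => w n k * W (k + s) t) n]
    simp
  rw [h1]
  simp only [sub_eq_add_neg, Finset.sum_add_distrib, ← Finset.mul_sum,
    ← neg_mul, Finset.sum_neg_distrib]
  have h3 : ∀ k ∈ range (n + 1), w n k * W (k + (s + 1)) t = w n k * W (k + s + 1) t := by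
    intro k _; rfl
  rw [Finset.sum_congr rfl h3, h2]
  ring
end

section
/- With w_m and W_m the Whitney numbers of the first and second kinds of Dowling lattices, the shifted convolution c_{n,t}(s) = ∑_{k ≥ 0} w_m(n,k) W_m(k+s,t) vanishes identically for all s ≥ 0 whenever t < n. -/
open Finset

theorem stmt_14 (m : ℕ) (hm : 1 ≤ m) (w W : ℕ → ℕ → ℤ)
    (hw00 : w 0 0 = 1)
    (hw_vanish : ∀ n k : ℕ, n < k → w n k = 0)
    (hw_rec : ∀ n k : ℕ, w (n + 1) (k + 1) = w n k - (1 + (m : ℤ) * n) * w n (k + 1))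
    (hw_rec0 : ∀ n : ℕ, w (n + 1) 0 = -(1 + (m : ℤ) * n) * w n 0)
    (hW00 : W 0 0 = 1)
    (hW_vanish : ∀ n k : ℕ, n < k → W n k = 0)
    (hW_rec : ∀ n k : ℕ, W (n + 1) (k + 1) = W n k + (1 + (k + 1 : ℤ) * m) * W n (k + 1))
    (hW_rec0 : ∀ n : ℕ, W (n + 1) 0 = W n 0) :
    ∀ n t : ℕ, t < n → ∀ s : ℕ, ∑ k ∈ range (n + 1), w n k * W (k + s) t = 0 := by
  have wtop : ∀ n : ℕ, w n (n + 1) = 0 := fun n => hw_vanish n (n + 1) (by omega)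
  -- recurrence in n
  have key : ∀ n s t : ℕ,
      (∑ k ∈ range (n + 1 + 1), w (n + 1) k * W (k + s) t)
      = (∑ k ∈ range (n + 1), w n k * W (k + (s + 1)) t)
        - (1 + (m : ℤ) * n) * (∑ k ∈ range (n + 1), w n k * W (k + s) t) := by
    intro n s t
    have e2 := Finset.sum_range_succ' (fun k => w n k * W (k + s) t) (n + 1)
    have e3 := Finset.sum_range_succ (fun k => w n k * W (k + s) t) (n + 1)
    rw [e3, wtop, zero_mul, add_zero] at e2
    -- e2 : ∑ k ∈ range (n+1), w n (k+1) * W (k+1+s) t + w n 0 * W (0+s) t = ∑ ...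
    rw [Finset.sum_range_succ' (fun k => w (n + 1) k * W (k + s) t) (n + 1)]
    have step : ∀ k, w (n + 1) (k + 1) * W (k + 1 + s) t
        = w n k * W (k + (s + 1)) t - (1 + (m : ℤ) * n) * (w n (k + 1) * W (k + 1 + s) t) := by
      intro k
      have hi : k + 1 + s = k + (s + 1) := by omega
      rw [hw_rec, hi]; ring
    rw [Finset.sum_congr rfl (fun k _ => step k), Finset.sum_sub_distrib, hw_rec0]
    rw [← Finset.mul_sum]
    linear_combination (1 + (m : ℤ) * n) * e2
  -- recurrence in s, t = 0
  have sstep0 : ∀ n s : ℕ,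
      (∑ k ∈ range (n + 1), w n k * W (k + (s + 1)) 0)
      = ∑ k ∈ range (n + 1), w n k * W (k + s) 0 := by
    intro n s
    refine Finset.sum_congr rfl fun k _ => ?_
    have hi : k + (s + 1) = (k + s) + 1 := by omega
    rw [hi, hW_rec0]
  -- recurrence in s, t = t' + 1
  have sstepS : ∀ n s t : ℕ,
      (∑ k ∈ range (n + 1), w n k * W (k + (s + 1)) (t + 1))
      = (∑ k ∈ range (n + 1), w n k * W (k + s) t)
        + (1 + ((t : ℤ) + 1) * m) * ∑ k ∈ range (n + 1), w n k * W (k + s) (t + 1) := by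
    intro n s t
    rw [Finset.mul_sum, ← Finset.sum_add_distrib]
    refine Finset.sum_congr rfl fun k _ => ?_
    have hi : k + (s + 1) = (k + s) + 1 := by omega
    rw [hi, hW_rec (k + s) t]
    push_cast
    ring
  -- orthogonality at s = 0
  have base : ∀ n : ℕ, ∀ t, t < n → (∑ k ∈ range (n + 1), w n k * W (k + 0) t) = 0 := by
    intro n
    induction n with
    | zero => intro t ht; omega
    | succ n ih =>
      intro t ht
      rw [key n 0 t]
      rcases t with _ | t'
      · rw [sstep0 n 0]
        rcases Nat.eq_zero_or_pos n with h0 | h0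
        · subst h0; push_cast; ring
        · rw [ih 0 h0]; ring
      · rw [sstepS n 0 t', ih t' (by omega)]
        rcases lt_or_eq_of_le (Nat.lt_succ_iff.mp ht) with h2 | h2
        · rw [ih (t' + 1) h2]; ring
        · subst h2; push_cast; ring
  intro n
  have main : ∀ s, ∀ t, t < n → (∑ k ∈ range (n + 1), w n k * W (k + s) t) = 0 := by
    intro s
    induction s with
    | zero => exact base n
    | succ s ih =>
      intro t ht
      rcases t with _ | t'
      · rw [sstep0 n s]; exact ih 0 ht
      · rw [sstepS n s t', ih t' (by omega), ih (t' + 1) ht]; ring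
  intro t ht s
  exact main s t ht
end

section
/- The r-Whitney numbers satisfy (mx+r)^n = ∑_{k=0}^{n} m^k W_{m,r}(n,k) (x)_k for all real x, where (x)_k = x(x-1)⋯(x-k+1), given that W_{m,r}(n,k) satisfies the recurrence W_{m,r}(n,k) = W_{m,r}(n-1,k-1) + (km+r) W_{m,r}(n-1,k) with W_{m,r}(0,0)=1 and vanishing outside 0 ≤ k ≤ n. -/
open Finset

theorem stmt_17 (m r : ℕ) (hm : 1 ≤ m) (W : ℕ → ℕ → ℤ)
    (hW00 : W 0 0 = 1)
    (hW_vanish : ∀ n k : ℕ, n < k → W n k = 0)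
    (hW_rec : ∀ n k : ℕ, W (n + 1) (k + 1) = W n k + ((k + 1 : ℤ) * m + r) * W n (k + 1))
    (hW_rec0 : ∀ n : ℕ, W (n + 1) 0 = (r : ℤ) * W n 0) :
    ∀ (n : ℕ) (x : ℝ),
      ((m : ℝ) * x + r) ^ n
        = ∑ k ∈ range (n + 1), (m : ℝ) ^ k * (W n k : ℝ) * ∏ j ∈ range k, (x - j) := by
  intro n x
  induction n with
  | zero => simp [hW00]
  | succ n ih =>
    have h1 : ((m:ℝ)*x + r)^(n+1)
        = ∑ k ∈ range (n+1), ((m:ℝ)*x + r) *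
            ((m:ℝ)^k * (W n k : ℝ) * ∏ j ∈ range k, (x-j)) := by
      rw [pow_succ, ih, Finset.sum_mul]
      exact Finset.sum_congr rfl fun k _ => mul_comm _ _
    have hsplit : ∀ k ∈ range (n+1),
        ((m:ℝ)*x + r) * ((m:ℝ)^k * (W n k : ℝ) * ∏ j ∈ range k, (x-j))
        = (m:ℝ)^(k+1) * (W n k : ℝ) * ∏ j ∈ range (k+1), (x-j)
          + (m:ℝ)^k * ((k:ℝ)*m + r) * (W n k : ℝ) * ∏ j ∈ range k, (x-j) := by
      intro k _
      rw [prod_range_succ, pow_succ]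
      ring
    rw [h1, Finset.sum_congr rfl hsplit, Finset.sum_add_distrib]
    -- RHS manipulation
    rw [Finset.sum_range_succ' _ (n+1)]
    have hkey : ∀ k ∈ range (n+1),
        (m:ℝ)^(k+1) * (W (n+1) (k+1) : ℝ) * ∏ j ∈ range (k+1), (x-j)
        = (m:ℝ)^(k+1) * (W n k : ℝ) * ∏ j ∈ range (k+1), (x-j)
          + (m:ℝ)^(k+1) * (((k:ℝ)+1)*m + r) * (W n (k+1) : ℝ) * ∏ j ∈ range (k+1), (x-j) := by
      intro k _
      have h := hW_rec n k
      have : (W (n+1) (k+1) : ℝ) = (W n k : ℝ) + (((k:ℝ)+1)*m + r) * (W n (k+1) : ℝ) := by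
        rw [h]; push_cast; ring
      rw [this]; ring
    rw [Finset.sum_congr rfl hkey, Finset.sum_add_distrib]
    have h0 : ((m:ℝ)^0 * (W (n+1) 0 : ℝ) * ∏ j ∈ range 0, (x-j)) = (r:ℝ) * (W n 0 : ℝ) := by
      rw [hW_rec0 n]; push_cast; ring
    rw [h0]
    have hB : ∑ k ∈ range (n+1), (m:ℝ)^k * ((k:ℝ)*m + r) * (W n k : ℝ) * ∏ j ∈ range k, (x-j)
        = (∑ k ∈ range (n+1), (m:ℝ)^(k+1) * (((k:ℝ)+1)*m + r) * (W n (k+1) : ℝ) * ∏ j ∈ range (k+1), (x-j))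
          + (r:ℝ) * (W n 0 : ℝ) := by
      rw [Finset.sum_range_succ' (fun k => (m:ℝ)^k * ((k:ℝ)*m + r) * (W n k : ℝ) * ∏ j ∈ range k, (x-j)) n]
      rw [Finset.sum_range_succ (fun k => (m:ℝ)^(k+1) * (((k:ℝ)+1)*m + r) * (W n (k+1) : ℝ) * ∏ j ∈ range (k+1), (x-j)) n]
      have hz : (W n (n+1) : ℝ) = 0 := by
        rw [hW_vanish n (n+1) (Nat.lt_succ_self n)]; simp
      simp only [hz]
      push_cast
      ring
    rw [hB]
    ring
end
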